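/- arXiv:math/0311413 — 2 statements merged into one kernel-verified Lean document; each statement's English description precedes it below -/
import Mathlib

section
/- Let n and k be natural numbers with k ≤ n, and let q be any real number. Call a permutation α of {1,…,n} block-increasing if α is strictly increasing on {1,…,n-k} and strictly increasing on {n-k+1,…,n}. Then (∑_{α block-increasing} q^{inv(α)}) · [n-k]_q! · [k]_q! = [n]_q!; in particular, for -1 < q < 1 the sum ∑_{α block-increasing} q^{inv(α)} equals the Gaussian binomial coefficient [n]_q!/([n-k]_q! [k]_q!). -/
/-- The `q`-integer `[n]_q = ∑_{i=0}^{n-1} q^i`. -/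
noncomputable def qInt (q : ℝ) (n : ℕ) : ℝ := ∑ i ∈ Finset.range n, q ^ i

/-- The `q`-factorial `[n]_q! = ∏_{k=1}^{n} [k]_q`, with `[0]_q! = 1`. -/
noncomputable def qFact (q : ℝ) (n : ℕ) : ℝ := ∏ k ∈ Finset.range n, qInt q (k + 1)

/-- The number of inversions of a permutation `σ` of `{0, …, n-1}`:
the number of pairs `(i, j)` with `i < j` and `σ j < σ i`. -/
def inversions {n : ℕ} (σ : Equiv.Perm (Fin n)) : ℕ :=
  (Finset.univ.filter fun p : Fin n × Fin n => p.1 < p.2 ∧ σ p.2 < σ p.1).card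

/-- A permutation of `{0, …, n-1}` is block-increasing (with respect to the splitting into the
first `n - k` positions and the last `k` positions) if it is strictly increasing on each block. -/
def BlockIncreasing {n : ℕ} (k : ℕ) (α : Equiv.Perm (Fin n)) : Prop :=
  (∀ i j : Fin n, i < j → (j : ℕ) < n - k → α i < α j) ∧
  (∀ i j : Fin n, i < j → n - k ≤ (i : ℕ) → α i < α j)

instance {n k : ℕ} : DecidablePred (BlockIncreasing (n := n) k) := fun _ => by
  unfold BlockIncreasing; infer_instance

/-!
A permutation `σ` of `Fin (a + b)` factors uniquely as `α * (β × γ)`, where `β × γ` permutes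
each block in place and `α` is block-increasing: `β` and `γ` are the permutations sorting `σ` on
the two blocks. The inversions of `α * (β × γ)` are the cross-block inversions of `α` together
with the inversions of `β` and of `γ`, so with `P m = ∑_{σ ∈ S_m} q ^ inv σ` the sum over
block-increasing permutations satisfies `S a b * P a * P b = P (a + b)`. For `b = 1` a
block-increasing permutation is determined by its last value `v` and has `m - v` inversions, so
`S m 1 = [m + 1]_q`, and induction gives `P m = [m]_q!`. For `-1 < q` all `[j + 1]_q` are
positive, which justifies the division.
-/

open Finset Equiv Fin

theorem Fin.castAdd_lt_natAdd {a b : ℕ} (i : Fin a) (j : Fin b) : castAdd b i < natAdd a j := by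
  simp only [Fin.lt_def, val_castAdd, val_natAdd]; omega

section InversionCount

variable {α : Type*} [LinearOrder α]

def inversionCount {m : ℕ} (f : Fin m → α) : ℕ :=
  #{p : Fin m × Fin m | p.1 < p.2 ∧ f p.2 < f p.1}

theorem inversions_eq_inversionCount {m : ℕ} (σ : Perm (Fin m)) :
    inversions σ = inversionCount σ :=
  rfl

theorem inversionCount_eq_zero_of_strictMono {m : ℕ} {f : Fin m → α} (hf : StrictMono f) :
    inversionCount f = 0 := by
  simp only [inversionCount, card_eq_zero, filter_eq_empty_iff]
  rintro ⟨i, j⟩ - ⟨hij, hji⟩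
  exact (hf hij).not_gt hji

theorem inversions_one {m : ℕ} : inversions (1 : Perm (Fin m)) = 0 :=
  inversionCount_eq_zero_of_strictMono strictMono_id

theorem inversionCount_strictMono_comp {β : Type*} [LinearOrder β] {g : α → β}
    (hg : StrictMono g) {m : ℕ} (f : Fin m → α) :
    inversionCount (g ∘ f) = inversionCount f := by
  simp only [inversionCount, Function.comp_apply, hg.lt_iff_lt]

def crossInversionCount {a b : ℕ} (f : Fin (a + b) → α) : ℕ :=
  #{p : Fin a × Fin b | f (natAdd a p.2) < f (castAdd b p.1)}

theorem inversionCount_add {a b : ℕ} (f : Fin (a + b) → α) :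
    inversionCount f = inversionCount (f ∘ castAdd b) + inversionCount (f ∘ natAdd a) +
      crossInversionCount f := by
  have hnlt (i : Fin b) (j : Fin a) : ¬ natAdd a i < castAdd b j :=
    (castAdd_lt_natAdd j i).asymm
  simp only [inversionCount, crossInversionCount, card_filter, Fintype.sum_prod_type,
    Fin.sum_univ_add, sum_add_distrib, (strictMono_castAdd b).lt_iff_lt,
    (strictMono_natAdd a).lt_iff_lt, castAdd_lt_natAdd, hnlt, true_and, false_and, if_false,
    sum_const_zero, Function.comp_apply]
  ring

end InversionCount

section BlockPerm

variable {a b : ℕ}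

def blockPerm (a b : ℕ) : Perm (Fin a) × Perm (Fin b) →* Perm (Fin (a + b)) :=
  finSumFinEquiv.permCongrHom.toMonoidHom.comp (Perm.sumCongrHom _ _)

@[simp]
theorem blockPerm_castAdd (p : Perm (Fin a) × Perm (Fin b)) (i : Fin a) :
    blockPerm a b p (castAdd b i) = castAdd b (p.1 i) := by
  simp [blockPerm]

@[simp]
theorem blockPerm_natAdd (p : Perm (Fin a) × Perm (Fin b)) (j : Fin b) :
    blockPerm a b p (natAdd a j) = natAdd a (p.2 j) := by
  simp [blockPerm]

theorem blockIncreasing_iff (σ : Perm (Fin (a + b))) :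
    BlockIncreasing b σ ↔ StrictMono (σ ∘ castAdd b) ∧ StrictMono (σ ∘ natAdd a) := by
  simp only [BlockIncreasing, Nat.add_sub_cancel]
  refine ⟨fun ⟨h₁, h₂⟩ => ⟨fun i j hij => h₁ _ _ (strictMono_castAdd b hij) (by simp),
      fun i j hij => h₂ _ _ (strictMono_natAdd a hij) (by simp)⟩,
    fun ⟨h₁, h₂⟩ => ⟨?_, ?_⟩⟩
  · intro i j hij hj
    cases j using Fin.addCases with
    | right j => simp at hj
    | left j =>
      cases i using Fin.addCases with
      | left i => exact h₁ ((strictMono_castAdd b).lt_iff_lt.1 hij)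
      | right i => exact absurd hij (castAdd_lt_natAdd j i).asymm
  · intro i j hij hi
    cases i using Fin.addCases with
    | left i => exact absurd hi (by simp)
    | right i =>
      cases j using Fin.addCases with
      | left j => exact absurd hij (castAdd_lt_natAdd j i).asymm
      | right j => exact h₂ ((strictMono_natAdd a).lt_iff_lt.1 hij)

theorem mul_blockPerm_comp_castAdd (σ : Perm (Fin (a + b))) (p : Perm (Fin a) × Perm (Fin b)) :
    ⇑(σ * blockPerm a b p) ∘ castAdd b = (σ ∘ castAdd b) ∘ p.1 := by
  ext; simp

theorem mul_blockPerm_comp_natAdd (σ : Perm (Fin (a + b))) (p : Perm (Fin a) × Perm (Fin b)) :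
    ⇑(σ * blockPerm a b p) ∘ natAdd a = (σ ∘ natAdd a) ∘ p.2 := by
  ext; simp

theorem crossInversionCount_mul_blockPerm (σ : Perm (Fin (a + b)))
    (p : Perm (Fin a) × Perm (Fin b)) :
    crossInversionCount ⇑(σ * blockPerm a b p) = crossInversionCount ⇑σ := by
  refine card_equiv (p.1.prodCongr p.2) fun x => ?_
  simp

theorem inversions_mul_blockPerm {σ : Perm (Fin (a + b))} (hσ : BlockIncreasing b σ)
    (p : Perm (Fin a) × Perm (Fin b)) :
    inversions (σ * blockPerm a b p) = inversions σ + inversions p.1 + inversions p.2 := by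
  obtain ⟨h₁, h₂⟩ := (blockIncreasing_iff σ).1 hσ
  simp only [inversions_eq_inversionCount]
  rw [inversionCount_add, mul_blockPerm_comp_castAdd, mul_blockPerm_comp_natAdd,
    inversionCount_strictMono_comp h₁, inversionCount_strictMono_comp h₂,
    crossInversionCount_mul_blockPerm, inversionCount_add (σ : Fin (a + b) → Fin (a + b)),
    inversionCount_eq_zero_of_strictMono h₁, inversionCount_eq_zero_of_strictMono h₂]
  ring

end BlockPerm

theorem Tuple.sort_eq_of_monotone_comp {α : Type*} [LinearOrder α] {m : ℕ} {f : Fin m → α}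
    (hf : Function.Injective f) {τ : Perm (Fin m)} (h : Monotone (f ∘ τ)) : Tuple.sort f = τ :=
  Equiv.ext fun x => hf (congrFun (Tuple.comp_sort_eq_comp_iff_monotone.2 h) x).symm

section BlockDecomposition

variable {a b : ℕ}

def blockSort (σ : Perm (Fin (a + b))) : Perm (Fin a) × Perm (Fin b) :=
  (Tuple.sort (σ ∘ castAdd b), Tuple.sort (σ ∘ natAdd a))

theorem blockIncreasing_mul_blockPerm_blockSort (σ : Perm (Fin (a + b))) :
    BlockIncreasing b (σ * blockPerm a b (blockSort σ)) := by
  rw [blockIncreasing_iff, mul_blockPerm_comp_castAdd, mul_blockPerm_comp_natAdd]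
  exact ⟨(Tuple.monotone_sort _).strictMono_of_injective
      ((σ.injective.comp (castAdd_injective a b)).comp (Equiv.injective _)),
    (Tuple.monotone_sort _).strictMono_of_injective
      ((σ.injective.comp (natAdd_injective b a)).comp (Equiv.injective _))⟩

theorem blockSort_mul_blockPerm {σ : Perm (Fin (a + b))} (hσ : BlockIncreasing b σ)
    (p : Perm (Fin a) × Perm (Fin b)) : blockSort (σ * blockPerm a b p) = p⁻¹ := by
  obtain ⟨h₁, h₂⟩ := (blockIncreasing_iff σ).1 hσ
  refine Prod.ext (Tuple.sort_eq_of_monotone_comp ?_ ?_) (Tuple.sort_eq_of_monotone_comp ?_ ?_)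
  · exact (Equiv.injective _).comp (castAdd_injective a b)
  · rw [mul_blockPerm_comp_castAdd]
    convert h₁.monotone using 1
    ext; simp
  · exact (Equiv.injective _).comp (natAdd_injective b a)
  · rw [mul_blockPerm_comp_natAdd]
    convert h₂.monotone using 1
    ext; simp

variable (a b) in
def blockDecomposition :
    {σ : Perm (Fin (a + b)) // BlockIncreasing b σ} × (Perm (Fin a) × Perm (Fin b)) ≃
      Perm (Fin (a + b)) where
  toFun x := x.1 * blockPerm a b x.2
  invFun σ := (⟨σ * blockPerm a b (blockSort σ), blockIncreasing_mul_blockPerm_blockSort σ⟩,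
    (blockSort σ)⁻¹)
  left_inv := fun ⟨⟨σ, hσ⟩, p⟩ => by
    simp [blockSort_mul_blockPerm hσ, mul_assoc]
  right_inv σ := by simp [mul_assoc]

theorem sum_blockIncreasing_mul_sum_mul_sum {R : Type*} [CommSemiring R] (q : R) (a b : ℕ) :
    (∑ σ ∈ univ.filter (BlockIncreasing (n := a + b) b), q ^ inversions σ) *
        (∑ σ : Perm (Fin a), q ^ inversions σ) * (∑ σ : Perm (Fin b), q ^ inversions σ) =
      ∑ σ : Perm (Fin (a + b)), q ^ inversions σ := by
  rw [← (blockDecomposition a b).sum_comp, Fintype.sum_prod_type,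
    sum_subtype (F := inferInstance) _ mem_filter_univ]
  simp only [blockDecomposition, Equiv.coe_fn_mk, inversions_mul_blockPerm (Subtype.prop _),
    pow_add, Fintype.sum_prod_type, mul_assoc]
  rw [sum_mul]
  simp_rw [sum_mul_sum, mul_sum]

end BlockDecomposition

section LastBlockOfSizeOne

variable {m : ℕ}

theorem blockIncreasing_one_iff (σ : Perm (Fin (m + 1))) :
    BlockIncreasing 1 σ ↔ StrictMono (σ ∘ castSucc) := by
  rw [blockIncreasing_iff]
  exact and_iff_left (Subsingleton.strictMono _)

theorem range_comp_castSucc (σ : Perm (Fin (m + 1))) :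
    Set.range (σ ∘ castSucc) = {σ (last m)}ᶜ := by
  rw [Set.range_comp, ← succAbove_last, range_succAbove, Set.image_compl_eq σ.bijective,
    Set.image_singleton]

theorem injective_apply_last_of_blockIncreasing :
    Function.Injective
      fun σ : {σ : Perm (Fin (m + 1)) // BlockIncreasing 1 σ} => σ.1 (last m) := by
  rintro ⟨σ, hσ⟩ ⟨τ, hτ⟩ (h : σ (last m) = τ (last m))
  rw [blockIncreasing_one_iff] at hσ hτ
  have h' : σ ∘ castSucc = τ ∘ castSucc :=
    (hσ.range_inj hτ).1 (by rw [range_comp_castSucc, range_comp_castSucc, h])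
  exact Subtype.ext (Equiv.ext fun i => lastCases h (congrFun h') i)

theorem card_blockIncreasing_one :
    Fintype.card {σ : Perm (Fin (m + 1)) // BlockIncreasing 1 σ} = m + 1 := by
  have h := Fintype.card_congr (blockDecomposition m 1)
  simp only [Fintype.card_prod, Fintype.card_perm, Fintype.card_fin, Nat.factorial_succ,
    Nat.factorial_zero, zero_add, mul_one] at h
  exact Nat.eq_of_mul_eq_mul_right (Nat.factorial_pos m) h

theorem inversions_of_blockIncreasing_one {σ : Perm (Fin (m + 1))} (hσ : BlockIncreasing 1 σ) :
    inversions σ = m - σ (last m) := by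
  obtain ⟨h₁, h₂⟩ := (blockIncreasing_iff σ).1 hσ
  rw [inversions_eq_inversionCount, inversionCount_add, inversionCount_eq_zero_of_strictMono h₁,
    inversionCount_eq_zero_of_strictMono h₂, zero_add, zero_add, crossInversionCount, card_filter,
    Fintype.sum_prod_type]
  calc ∑ i : Fin m, (if σ (last m) < σ (castSucc i) then 1 else 0)
      = ∑ j, if σ (last m) < σ j then 1 else 0 := by
        rw [Fin.sum_univ_castSucc, if_neg (lt_irrefl _), add_zero]
    _ = ∑ y, if σ (last m) < y then 1 else 0 :=
        Equiv.sum_comp σ fun y => if σ (last m) < y then 1 else 0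
    _ = m - σ (last m) := by rw [← card_filter, filter_lt_eq_Ioi, card_Ioi, Nat.add_sub_cancel]

theorem sum_blockIncreasing_one {R : Type*} [CommSemiring R] (q : R) :
    ∑ σ ∈ univ.filter (BlockIncreasing (n := m + 1) 1), q ^ inversions σ =
      ∑ i ∈ range (m + 1), q ^ i := by
  have hbij : Function.Bijective
      fun σ : {σ : Perm (Fin (m + 1)) // BlockIncreasing 1 σ} => σ.1 (last m) :=
    (Fintype.bijective_iff_injective_and_card _).2
      ⟨injective_apply_last_of_blockIncreasing,
        by rw [card_blockIncreasing_one, Fintype.card_fin]⟩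
  rw [sum_subtype (F := inferInstance) _ mem_filter_univ,
    Fintype.sum_bijective _ hbij _ (fun v => q ^ (m - v))
      fun σ => by rw [inversions_of_blockIncreasing_one σ.2],
    ← Fin.sum_univ_eq_sum_range]
  exact Fintype.sum_equiv revPerm _ _ fun v => by simp [val_rev]

end LastBlockOfSizeOne

theorem qFact_succ (q : ℝ) (m : ℕ) : qFact q (m + 1) = qFact q m * qInt q (m + 1) :=
  prod_range_succ _ m

theorem sum_perm_pow_inversions (q : ℝ) (m : ℕ) :
    ∑ σ : Perm (Fin m), q ^ inversions σ = qFact q m := by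
  induction m with
  | zero => simp [qFact, inversions_one]
  | succ m ih =>
    have h := sum_blockIncreasing_mul_sum_mul_sum q m 1
    rw [sum_blockIncreasing_one, ih, Fintype.sum_unique, Subsingleton.elim default 1,
      inversions_one, pow_zero, mul_one] at h
    rw [← h, qFact_succ, qInt, mul_comm]

theorem qFact_pos {q : ℝ} (hq : -1 < q) (m : ℕ) : 0 < qFact q m :=
  prod_pos fun i _ => geom_sum_pos' (by linarith) i.succ_ne_zero

theorem sum_blockIncreasing_q_pow_inversions (q : ℝ) (n k : ℕ) (h : k ≤ n) :
    (∑ α ∈ Finset.univ.filter (BlockIncreasing (n := n) k), q ^ inversions α) *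
        qFact q (n - k) * qFact q k = qFact q n ∧
    ((-1 < q ∧ q < 1) →
      ∑ α ∈ Finset.univ.filter (BlockIncreasing (n := n) k), q ^ inversions α =
        qFact q n / (qFact q (n - k) * qFact q k)) := by
  obtain ⟨a, rfl⟩ := Nat.exists_eq_add_of_le' h
  have key := sum_blockIncreasing_mul_sum_mul_sum q a k
  simp only [sum_perm_pow_inversions] at key
  rw [Nat.add_sub_cancel]
  refine ⟨key, fun hq => ?_⟩
  rw [eq_div_iff (mul_pos (qFact_pos hq.1 a) (qFact_pos hq.1 k)).ne', ← mul_assoc, key]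
end

section
/- Let H be a complex inner product space, let q be a real number with -1 < q < 1, let e_1,…,e_n, e be unit vectors of H, and let m be a natural number. Let w be the (n+m)-tuple (e_1,…,e_n,e,…,e) ending with m copies of e. Then Q(w,w) ≤ C_q^n · [m]_q!, where Q is the q-form on (n+m)-tuples. -/
open scoped ComplexOrder

/-- The `q`-form `Q(v, w) = ∑_{σ ∈ S_n} q^{inv σ} ∏_i ⟨v_i, w_{σ(i)}⟩` on `n`-tuples of vectors
of a complex inner product space. -/
noncomputable def qForm {H : Type*} [NormedAddCommGroup H] [InnerProductSpace ℂ H]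
    (q : ℝ) {n : ℕ} (v w : Fin n → H) : ℂ :=
  ∑ σ : Equiv.Perm (Fin n), (q : ℂ) ^ inversions σ * ∏ i, (inner ℂ (v i) (w (σ i)) : ℂ)

/-- The constant `C_q = ∏_{i=1}^∞ (1 - |q|^i)⁻¹`. -/
noncomputable def Cq (q : ℝ) : ℝ := ∏' i : ℕ, (1 - |q| ^ (i + 1))⁻¹

/-!
Every permutation of `Fin (n + m)` factors uniquely as `σ * τ`, where `τ` only permutes the last
`m` positions and `σ` is increasing on them, and then `inv (σ * τ) = inv σ + inv τ`. As the word
is invariant under permuting its last `m` letters, the sum over `τ` splits off `Q(w, w)` as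
`∑_τ q^{inv τ} = [m]_q!`. What is left is a sum over the representatives `σ` of terms of modulus
at most `|q|^{inv σ}`, and `∑_σ |q|^{inv σ} = [n + m]_{|q|}! / [m]_{|q|}!` is a product of `n`
`|q|`-integers, each below `(1 - |q|)⁻¹ ≤ C_q`. The generating function `∑_τ c^{inv τ} = [M]_c!`
comes from the same factorization with `n = 1`, where `σ` is determined by `σ 0 = inv σ`.
-/

open Equiv Finset

section Permutations

variable {n m : ℕ}

def tailPerm (n m : ℕ) : Perm (Fin m) →* Perm (Fin (n + m)) :=
  finSumFinEquiv.permCongrHom.toMonoidHom.comp ((Perm.sumCongrHom _ _).comp (MonoidHom.inr _ _))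

@[simp] lemma tailPerm_castAdd (τ : Perm (Fin m)) (i : Fin n) :
    tailPerm n m τ (Fin.castAdd m i) = Fin.castAdd m i := by
  simp [tailPerm, ← finSumFinEquiv_apply_left]

@[simp] lemma tailPerm_natAdd (τ : Perm (Fin m)) (i : Fin m) :
    tailPerm n m τ (Fin.natAdd n i) = Fin.natAdd n (τ i) := by
  simp [tailPerm, ← finSumFinEquiv_apply_right]

lemma mul_tailPerm_comp_natAdd (ρ : Perm (Fin (n + m))) (τ : Perm (Fin m)) :
    ⇑(ρ * tailPerm n m τ) ∘ Fin.natAdd n = (ρ ∘ Fin.natAdd n) ∘ τ := by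
  funext i
  simp

def tailSorted (n m : ℕ) : Finset (Perm (Fin (n + m))) :=
  {σ | StrictMono (σ ∘ Fin.natAdd n)}

lemma mem_tailSorted {σ : Perm (Fin (n + m))} :
    σ ∈ tailSorted n m ↔ StrictMono (σ ∘ Fin.natAdd n) := by
  simp [tailSorted]

lemma Tuple.sort_eq_of_strictMono {α : Type*} [LinearOrder α] {k : ℕ} {f : Fin k → α}
    {s : Perm (Fin k)} (h : StrictMono (f ∘ s)) : Tuple.sort f = s :=
  (Tuple.eq_sort_iff.2 ⟨h.monotone, fun _ _ hij he => absurd he (h hij).ne⟩).symm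

lemma sum_perm_eq_sum_tailSorted {R : Type*} [AddCommMonoid R] (g : Perm (Fin (n + m)) → R) :
    ∑ ρ, g ρ = ∑ σ ∈ tailSorted n m, ∑ τ, g (σ * tailPerm n m τ) := by
  let s (ρ : Perm (Fin (n + m))) := Tuple.sort (ρ ∘ Fin.natAdd n)
  rw [← Finset.sum_product']
  symm
  refine Finset.sum_nbij' (fun p => p.1 * tailPerm n m p.2)
    (fun ρ => (ρ * tailPerm n m (s ρ), (s ρ)⁻¹)) (by simp) ?_ ?_ (by simp) (by simp)
  · intro ρ _
    simp only [mem_product, mem_tailSorted, mem_univ, and_true]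
    rw [mul_tailPerm_comp_natAdd]
    exact (Tuple.monotone_sort _).strictMono_of_injective
      (ρ.injective.comp ((Fin.natAdd_injective _ _).comp (s ρ).injective))
  · rintro ⟨σ, τ⟩ hp
    simp only [mem_product, mem_tailSorted, mem_univ, and_true] at hp
    have : s (σ * tailPerm n m τ) = τ⁻¹ := by
      apply Tuple.sort_eq_of_strictMono
      rwa [mul_tailPerm_comp_natAdd, Function.comp_assoc, ← Perm.coe_mul, mul_inv_cancel,
        Perm.coe_one, Function.comp_id]
    simp [this]

end Permutations

section Inversions

variable {n m : ℕ}

lemma inversions_eq_sum {k : ℕ} (σ : Perm (Fin k)) :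
    inversions σ = ∑ a, ∑ b, if a < b ∧ σ b < σ a then 1 else 0 := by
  rw [inversions, card_filter, Fintype.sum_prod_type]

lemma inversions_inv {k : ℕ} (σ : Perm (Fin k)) : inversions σ⁻¹ = inversions σ := by
  rw [inversions_eq_sum, inversions_eq_sum, Finset.sum_comm]
  refine (Equiv.sum_comp σ _).symm.trans (Finset.sum_congr rfl fun a _ => ?_)
  refine (Equiv.sum_comp σ _).symm.trans (Finset.sum_congr rfl fun b _ => ?_)
  simp [and_comm]

lemma inversions_eq_blocks (ρ : Perm (Fin (n + m))) :
    inversions ρ =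
      (∑ i, ∑ j, if i < j ∧ ρ (Fin.castAdd m j) < ρ (Fin.castAdd m i) then 1 else 0) +
      (∑ i : Fin n, ∑ j : Fin m, if ρ (Fin.natAdd n j) < ρ (Fin.castAdd m i) then 1 else 0) +
      ∑ i, ∑ j, if i < j ∧ ρ (Fin.natAdd n j) < ρ (Fin.natAdd n i) then 1 else 0 := by
  have hlt (i : Fin n) (j : Fin m) : Fin.castAdd m i < Fin.natAdd n j := by
    simp only [Fin.lt_def, Fin.val_castAdd, Fin.val_natAdd]
    omega
  simp only [inversions_eq_sum, Fin.sum_univ_add, Finset.sum_add_distrib, hlt,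
    (hlt _ _).not_gt, (Fin.strictMono_castAdd m).lt_iff_lt, Fin.natAdd_lt_natAdd_iff, true_and,
    false_and, if_false, sum_const_zero, add_zero]
  ring

lemma inversions_mul_tailPerm {σ : Perm (Fin (n + m))} (hσ : σ ∈ tailSorted n m)
    (τ : Perm (Fin m)) : inversions (σ * tailPerm n m τ) = inversions σ + inversions τ := by
  rw [mem_tailSorted] at hσ
  have hσ' (i j : Fin m) : σ (Fin.natAdd n i) < σ (Fin.natAdd n j) ↔ i < j := hσ.lt_iff_lt
  rw [inversions_eq_blocks, inversions_eq_blocks, inversions_eq_sum τ]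
  simp only [Perm.mul_apply, tailPerm_castAdd, tailPerm_natAdd, hσ']
  have hcancel (i j : Fin m) : ¬(i < j ∧ j < i) := fun h => lt_asymm h.1 h.2
  rw [Finset.sum_congr rfl fun i _ =>
    Equiv.sum_comp τ fun j => if σ (Fin.natAdd n j) < σ (Fin.castAdd m i) then 1 else 0]
  simp only [hcancel, if_false, sum_const_zero, add_zero]

end Inversions

section Factorization

variable {n m : ℕ}

lemma sum_pow_inversions_mul_eq {R : Type*} [CommSemiring R] (c : R)
    (P : Perm (Fin (n + m)) → R) (hP : ∀ ρ τ, P (ρ * tailPerm n m τ) = P ρ) :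
    ∑ ρ, c ^ inversions ρ * P ρ =
      (∑ τ : Perm (Fin m), c ^ inversions τ) * ∑ σ ∈ tailSorted n m, c ^ inversions σ * P σ := by
  rw [sum_perm_eq_sum_tailSorted, Finset.mul_sum]
  refine Finset.sum_congr rfl fun σ hσ => ?_
  simp only [inversions_mul_tailPerm hσ, hP, pow_add, Finset.sum_mul]
  exact Finset.sum_congr rfl fun τ _ => by ring

lemma card_tailSorted_mul_factorial : #(tailSorted n m) * m.factorial = (n + m).factorial := by
  have h := sum_perm_eq_sum_tailSorted (n := n) (m := m) (R := ℕ) fun _ => 1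
  simp only [sum_const, card_univ, Fintype.card_perm, Fintype.card_fin, smul_eq_mul,
    mul_one] at h
  exact h.symm

lemma range_natAdd_one (N : ℕ) :
    Set.range (Fin.natAdd 1 : Fin N → Fin (1 + N)) = {Fin.castAdd N 0}ᶜ := by
  ext i
  rw [Fin.range_natAdd]
  simp only [Set.mem_ofPred_eq, Set.mem_compl_iff, Set.mem_singleton_iff, Fin.ext_iff,
    Fin.val_castAdd, Fin.val_eq_zero]
  omega

lemma injOn_apply_zero_tailSorted_one (N : ℕ) :
    Set.InjOn (fun σ : Perm (Fin (1 + N)) => σ (Fin.castAdd N 0)) (tailSorted 1 N) := by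
  intro σ hσ σ' hσ' h
  rw [mem_coe, mem_tailSorted] at hσ hσ'
  have hrange (π : Perm (Fin (1 + N))) :
      Set.range (π ∘ Fin.natAdd 1) = {π (Fin.castAdd N 0)}ᶜ := by
    rw [Set.range_comp, range_natAdd_one, Set.image_compl_eq π.bijective, Set.image_singleton]
  have htail : ⇑σ ∘ Fin.natAdd 1 = ⇑σ' ∘ Fin.natAdd 1 :=
    (hσ.range_inj hσ').1 (by rw [hrange, hrange]; exact congrArg _ (congrArg _ h))
  ext i
  induction i using Fin.addCases with
  | left i => rw [Subsingleton.elim i 0]; exact congrArg Fin.val h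
  | right i => exact congrArg Fin.val (congrFun htail i)

lemma inversions_of_mem_tailSorted_one {N : ℕ} {σ : Perm (Fin (1 + N))}
    (hσ : σ ∈ tailSorted 1 N) : inversions σ = σ (Fin.castAdd N 0) := by
  rw [mem_tailSorted] at hσ
  have hσ' (i j : Fin N) : σ (Fin.natAdd 1 i) < σ (Fin.natAdd 1 j) ↔ i < j := hσ.lt_iff_lt
  have hcancel (i j : Fin N) : ¬(i < j ∧ j < i) := fun h => lt_asymm h.1 h.2
  have hbelow : (∑ j : Fin N, if σ (Fin.natAdd 1 j) < σ (Fin.castAdd N 0) then 1 else 0) =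
      ∑ a, if σ a < σ (Fin.castAdd N 0) then 1 else 0 := by
    rw [Fin.sum_univ_add, Fin.sum_univ_one]
    simp
  rw [inversions_eq_blocks]
  simp only [Fin.sum_univ_one, hσ', hcancel, if_false, sum_const_zero, add_zero, lt_irrefl,
    false_and, zero_add, hbelow]
  rw [Equiv.sum_comp σ fun y => if y < σ (Fin.castAdd N 0) then 1 else 0, sum_boole,
    filter_gt_eq_Iio, Fin.card_Iio, Nat.cast_id]

lemma sum_tailSorted_one_pow_inversions {R : Type*} [CommSemiring R] (c : R) (N : ℕ) :
    ∑ σ ∈ tailSorted 1 N, c ^ inversions σ = ∑ k ∈ range (N + 1), c ^ k := by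
  have hcard : #(tailSorted 1 N) = 1 + N := by
    have h := card_tailSorted_mul_factorial (n := 1) (m := N)
    rw [show (1 + N).factorial = (1 + N) * N.factorial by rw [Nat.add_comm, Nat.factorial_succ]]
      at h
    exact Nat.eq_of_mul_eq_mul_right N.factorial_pos h
  have himage : (tailSorted 1 N).image (fun σ => σ (Fin.castAdd N 0)) = univ :=
    eq_univ_of_card _ <| by
      rw [card_image_of_injOn (injOn_apply_zero_tailSorted_one N), hcard, Fintype.card_fin]
  calc ∑ σ ∈ tailSorted 1 N, c ^ inversions σ
      = ∑ σ ∈ tailSorted 1 N, c ^ (σ (Fin.castAdd N 0) : ℕ) :=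
        sum_congr rfl fun σ hσ => by rw [inversions_of_mem_tailSorted_one hσ]
    _ = ∑ k : Fin (1 + N), c ^ (k : ℕ) := by
        rw [← himage, sum_image (injOn_apply_zero_tailSorted_one N)]
    _ = ∑ k ∈ range (N + 1), c ^ k := by rw [Fin.sum_univ_eq_sum_range, Nat.add_comm]

theorem sum_pow_inversions {R : Type*} [CommSemiring R] (c : R) (M : ℕ) :
    ∑ τ : Perm (Fin M), c ^ inversions τ = ∏ k ∈ range M, ∑ i ∈ range (k + 1), c ^ i := by
  induction M with
  | zero => simp [inversions]
  | succ N ih =>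
    have h := sum_pow_inversions_mul_eq (n := 1) (m := N) c (fun _ => 1) fun _ _ => rfl
    simp only [mul_one] at h
    rw [prod_range_succ, ← ih, ← sum_tailSorted_one_pow_inversions, ← h]
    exact congrArg (fun M => ∑ ρ : Perm (Fin M), c ^ inversions ρ) (Nat.add_comm N 1)

end Factorization

section Analytic

variable {x : ℝ}

lemma qFact_pos_s11 (hx : 0 < x + 1) (m : ℕ) : 0 < qFact x m :=
  prod_pos fun k _ => geom_sum_pos' hx k.succ_ne_zero

lemma qInt_le_inv_one_sub (hx0 : 0 ≤ x) (hx1 : x < 1) (N : ℕ) : qInt x N ≤ (1 - x)⁻¹ := by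
  rw [qInt, range_eq_Ico]
  simpa using geom_sum_Ico_le_of_lt_one (m := 0) (n := N) hx0 hx1

lemma sum_tailSorted_pow_inversions {n m : ℕ} (hx : 0 < x + 1) :
    ∑ σ ∈ tailSorted n m, x ^ inversions σ = ∏ k ∈ range n, qInt x (m + k + 1) := by
  have h := sum_pow_inversions_mul_eq (n := n) (m := m) x (fun _ => 1) fun _ _ => rfl
  simp only [mul_one, sum_pow_inversions] at h
  have hsplit : qFact x (n + m) = qFact x m * ∏ k ∈ range n, qInt x (m + k + 1) := by
    rw [Nat.add_comm, qFact, prod_range_add, qFact]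
  refine mul_left_cancel₀ (qFact_pos_s11 hx m).ne' ?_
  rw [← hsplit]
  exact h.symm

lemma inv_one_sub_abs_le_Cq {q : ℝ} (hq : |q| < 1) : (1 - |q|)⁻¹ ≤ Cq q := by
  have hpos (i : ℕ) : 0 < 1 - |q| ^ (i + 1) :=
    sub_pos.2 (pow_lt_one₀ (abs_nonneg q) hq i.succ_ne_zero)
  have hgeom : Summable fun i : ℕ => |q| ^ (i + 1) :=
    (summable_nat_add_iff 1).2 (summable_geometric_of_lt_one (abs_nonneg q) hq)
  have hlog : Summable fun i : ℕ => Real.log (1 - |q| ^ (i + 1))⁻¹ :=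
    (Real.summable_log_one_add_of_summable hgeom.neg).neg.congr fun i => by
      rw [Real.log_inv, sub_eq_add_neg]
  have hlog_nonneg (i : ℕ) : 0 ≤ Real.log (1 - |q| ^ (i + 1))⁻¹ :=
    Real.log_nonneg ((one_le_inv₀ (hpos i)).2 (by linarith [pow_nonneg (abs_nonneg q) (i + 1)]))
  calc (1 - |q|)⁻¹ = Real.exp (Real.log (1 - |q| ^ (0 + 1))⁻¹) := by
        rw [Real.exp_log (inv_pos.2 (hpos 0)), zero_add, pow_one]
    _ ≤ Real.exp (∑' i, Real.log (1 - |q| ^ (i + 1))⁻¹) :=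
        Real.exp_le_exp.2 (hlog.le_tsum 0 fun j _ => hlog_nonneg j)
    _ = Cq q := Real.rexp_tsum_eq_tprod (fun i => inv_pos.2 (hpos i)) hlog

end Analytic

section QForm

variable {H : Type*} [NormedAddCommGroup H] [InnerProductSpace ℂ H] {q : ℝ}

lemma conj_qForm {k : ℕ} (v w : Fin k → H) : starRingEnd ℂ (qForm q v w) = qForm q w v := by
  rw [qForm, qForm, map_sum]
  refine (Equiv.sum_comp (Equiv.inv (Perm (Fin k))) _).symm.trans (sum_congr rfl fun ρ _ => ?_)
  simp only [Equiv.inv_apply, map_mul, map_pow, Complex.conj_ofReal, map_prod, inner_conj_symm,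
    inversions_inv]
  congr 1
  rw [← Equiv.prod_comp ρ]
  simp

lemma qForm_self_im {k : ℕ} (w : Fin k → H) : (qForm q w w).im = 0 :=
  Complex.conj_eq_iff_im.1 (conj_qForm w w)

variable {n m : ℕ}

lemma qForm_eq_qFact_mul {v : Fin (n + m) → H} (w : Fin (n + m) → H)
    (hinv : ∀ τ i, v (tailPerm n m τ i) = v i) :
    qForm q v w = qFact q m *
      ∑ σ ∈ tailSorted n m, (q : ℂ) ^ inversions σ * ∏ i, inner ℂ (v i) (w (σ i)) := by
  rw [qForm, sum_pow_inversions_mul_eq]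
  · rw [sum_pow_inversions]
    push_cast [qFact, qInt]
    rfl
  · intro ρ τ
    rw [← Equiv.prod_comp (tailPerm n m τ) fun i => inner ℂ (v i) (w (ρ i))]
    simp [hinv]

lemma norm_qForm_le (hq : |q| < 1) {v w : Fin (n + m) → H} (hv : ∀ i, ‖v i‖ ≤ 1)
    (hw : ∀ i, ‖w i‖ ≤ 1) (hinv : ∀ τ i, v (tailPerm n m τ i) = v i) :
    ‖qForm q v w‖ ≤ qFact q m * (1 - |q|)⁻¹ ^ n := by
  have hq₀ : 0 < q + 1 := by linarith [neg_abs_le q]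
  have hP (σ : Perm (Fin (n + m))) : ‖∏ i, inner ℂ (v i) (w (σ i))‖ ≤ 1 := by
    rw [norm_prod]
    exact prod_le_one (fun _ _ => norm_nonneg _) fun i _ =>
      (norm_inner_le_norm _ _).trans (mul_le_one₀ (hv i) (norm_nonneg _) (hw _))
  rw [qForm_eq_qFact_mul w hinv, norm_mul, Complex.norm_real,
    Real.norm_of_nonneg (qFact_pos_s11 hq₀ m).le]
  refine mul_le_mul_of_nonneg_left ?_ (qFact_pos_s11 hq₀ m).le
  calc ‖∑ σ ∈ tailSorted n m, (q : ℂ) ^ inversions σ * ∏ i, inner ℂ (v i) (w (σ i))‖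
      ≤ ∑ σ ∈ tailSorted n m, |q| ^ inversions σ := by
        refine norm_sum_le_of_le _ fun σ _ => ?_
        rw [norm_mul, norm_pow, Complex.norm_real, Real.norm_eq_abs]
        exact mul_le_of_le_one_right (by positivity) (hP σ)
    _ = ∏ k ∈ range n, qInt |q| (m + k + 1) :=
        sum_tailSorted_pow_inversions (by linarith [abs_nonneg q])
    _ ≤ (1 - |q|)⁻¹ ^ n := by
        refine (prod_le_prod (fun _ _ => sum_nonneg fun _ _ => by positivity)
          fun _ _ => qInt_le_inv_one_sub (abs_nonneg q) hq _).trans_eq ?_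
        rw [prod_const, card_range]

end QForm

theorem qForm_word_norm_bound {H : Type*} [NormedAddCommGroup H] [InnerProductSpace ℂ H]
    (q : ℝ) (hq : -1 < q ∧ q < 1) (n m : ℕ) (f : Fin n → H) (e : H)
    (hf : ∀ i, ‖f i‖ = 1) (he : ‖e‖ = 1)
    (w : Fin (n + m) → H) (hw : w = Fin.append f fun _ : Fin m => e) :
    qForm q w w ≤ ((Cq q ^ n * qFact q m : ℝ) : ℂ) := by
  have hq_abs : |q| < 1 := abs_lt.2 hq
  have hnorm (i : Fin (n + m)) : ‖w i‖ ≤ 1 := by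
    induction i using Fin.addCases <;> simp [hw, hf, he]
  have hinv (τ : Perm (Fin m)) (i : Fin (n + m)) : w (tailPerm n m τ i) = w i := by
    induction i using Fin.addCases <;> simp [hw]
  rw [Complex.le_def, Complex.ofReal_re, Complex.ofReal_im, qForm_self_im]
  refine ⟨?_, rfl⟩
  calc (qForm q w w).re ≤ ‖qForm q w w‖ := Complex.re_le_norm _
    _ ≤ qFact q m * (1 - |q|)⁻¹ ^ n := norm_qForm_le hq_abs hnorm hnorm hinv
    _ ≤ qFact q m * Cq q ^ n :=
        mul_le_mul_of_nonneg_left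
          (pow_le_pow_left₀ (inv_nonneg.2 (by linarith)) (inv_one_sub_abs_le_Cq hq_abs) n)
          (qFact_pos_s11 (by linarith [hq.1]) m).le
    _ = Cq q ^ n * qFact q m := mul_comm _ _
end
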